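/- Let ā > 0 and let ρ : ℝ → ℝ be twice continuously differentiable, 2π-periodic, with ρ(θ) > 0 for all θ. Let Φ : ℝ² → ℝ satisfy Φ(r cos θ, r sin θ) = ā r² / ρ(θ)² for all r > 0 and θ ∈ ℝ. Then Φ is twice continuously differentiable on ℝ² \ {0}, and for all r > 0 and θ ∈ ℝ the determinant of the Hessian matrix of Φ (i.e. ∂²Φ/∂x₁² · ∂²Φ/∂x₂² − (∂²Φ/∂x₁∂x₂)²) at the point (r cos θ, r sin θ) equals (2ā/ρ(θ)²)² · (ρ(θ)² + 2ρ'(θ)² − ρ(θ)ρ''(θ))/ρ(θ)². -/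

import Mathlib

open Real

/-- First partial derivative (with respect to the first coordinate) of a
function on the plane `ℝ × ℝ`. -/
noncomputable def pderiv1 (f : ℝ × ℝ → ℝ) : ℝ × ℝ → ℝ :=
  fun p => deriv (fun u => f (u, p.2)) p.1

/-- First partial derivative (with respect to the second coordinate) of a
function on the plane `ℝ × ℝ`. -/
noncomputable def pderiv2 (f : ℝ × ℝ → ℝ) : ℝ × ℝ → ℝ :=
  fun p => deriv (fun u => f (p.1, u)) p.2

/-- Determinant of the Hessian matrix of second partial derivatives. -/
noncomputable def hessianDet (f : ℝ × ℝ → ℝ) : ℝ × ℝ → ℝ :=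
  fun p => pderiv1 (pderiv1 f) p * pderiv2 (pderiv2 f) p - (pderiv1 (pderiv2 f) p) ^ 2

/-! Around any `p ≠ 0` the polar angle has the smooth branch `localArg θ₀`, so that locally
`Φ p = |p|² g (localArg θ₀ p)` with `g = ā / ρ²`. Since `∂ₓ localArg = -y / |p|²` and
`∂_y localArg = x / |p|²`, two differentiations give, on the ray of angle `θ`,
`det D²Φ = 4 g² + 2 g g'' - g'²`, which for `g = ā / ρ²` is the claimed expression. -/

open Topology

lemma Filter.EventuallyEq.pderiv1_eq {f f' : ℝ × ℝ → ℝ} {p : ℝ × ℝ} (h : f =ᶠ[𝓝 p] f') :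
    pderiv1 f p = pderiv1 f' p :=
  (h.comp_tendsto (by fun_prop : Continuous fun u : ℝ => (u, p.2)).continuousAt).deriv_eq

lemma Filter.EventuallyEq.pderiv2_eq {f f' : ℝ × ℝ → ℝ} {p : ℝ × ℝ} (h : f =ᶠ[𝓝 p] f') :
    pderiv2 f p = pderiv2 f' p :=
  (h.comp_tendsto (by fun_prop : Continuous fun u : ℝ => (p.1, u)).continuousAt).deriv_eq

lemma Filter.EventuallyEq.hessianDet_eq {f f' : ℝ × ℝ → ℝ} {p : ℝ × ℝ} (h : f =ᶠ[𝓝 p] f') :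
    hessianDet f p = hessianDet f' p := by
  have h₁ : pderiv1 f =ᶠ[𝓝 p] pderiv1 f' := h.eventuallyEq_nhds.mono fun _ h => h.pderiv1_eq
  have h₂ : pderiv2 f =ᶠ[𝓝 p] pderiv2 f' := h.eventuallyEq_nhds.mono fun _ h => h.pderiv2_eq
  simp only [hessianDet, h₁.pderiv1_eq, h₂.pderiv1_eq, h₂.pderiv2_eq]

lemma hasDerivAt_arctan_div {A B : ℝ → ℝ} {A' B' x : ℝ} (hA : HasDerivAt A A' x)
    (hB : HasDerivAt B B' x) (h : A x ≠ 0) :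
    HasDerivAt (fun t => arctan (B t / A t)) ((A x * B' - B x * A') / (A x ^ 2 + B x ^ 2)) x := by
  refine (hB.fun_div hA h).arctan.congr_deriv ?_
  field_simp

lemma cos_arctan_div {A : ℝ} (B : ℝ) (hA : 0 < A) :
    cos (arctan (B / A)) = A / √(A ^ 2 + B ^ 2) := by
  have h : 1 + (B / A) ^ 2 = (A ^ 2 + B ^ 2) / A ^ 2 := by field_simp
  rw [cos_arctan, h, sqrt_div' _ (sq_nonneg A), sqrt_sq hA.le, one_div_div]

lemma sin_arctan_div {A : ℝ} (B : ℝ) (hA : 0 < A) :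
    sin (arctan (B / A)) = B / √(A ^ 2 + B ^ 2) := by
  rw [sin_arctan, div_eq_mul_one_div, ← cos_arctan, cos_arctan_div B hA]
  field_simp

def halfPlane (θ₀ : ℝ) : Set (ℝ × ℝ) := {p | 0 < cos θ₀ * p.1 + sin θ₀ * p.2}

/-- The branch of the polar angle on `halfPlane θ₀` with values in `(θ₀ - π / 2, θ₀ + π / 2)`. -/
noncomputable def localArg (θ₀ : ℝ) (p : ℝ × ℝ) : ℝ :=
  θ₀ + arctan ((cos θ₀ * p.2 - sin θ₀ * p.1) / (cos θ₀ * p.1 + sin θ₀ * p.2))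

noncomputable def polarExt (g : ℝ → ℝ) (θ₀ : ℝ) (p : ℝ × ℝ) : ℝ :=
  (p.1 ^ 2 + p.2 ^ 2) * g (localArg θ₀ p)

lemma rotate_sq_add_sq (θ₀ x y : ℝ) :
    (cos θ₀ * x + sin θ₀ * y) ^ 2 + (cos θ₀ * y - sin θ₀ * x) ^ 2 = x ^ 2 + y ^ 2 := by
  linear_combination (x ^ 2 + y ^ 2) * cos_sq_add_sin_sq θ₀

lemma isOpen_halfPlane (θ₀ : ℝ) : IsOpen (halfPlane θ₀) :=
  isOpen_lt continuous_const (by fun_prop)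

lemma halfPlane_mem_nhds {θ₀ : ℝ} {p : ℝ × ℝ} (hp : p ∈ halfPlane θ₀) : halfPlane θ₀ ∈ 𝓝 p :=
  (isOpen_halfPlane θ₀).mem_nhds hp

lemma sq_add_sq_pos_of_mem_halfPlane {θ₀ x y : ℝ} (h : (x, y) ∈ halfPlane θ₀) :
    0 < x ^ 2 + y ^ 2 := by
  rw [← rotate_sq_add_sq θ₀]
  exact add_pos_of_pos_of_nonneg (pow_pos h 2) (sq_nonneg _)

lemma polar_mem_halfPlane {r : ℝ} (hr : 0 < r) (θ : ℝ) : (r * cos θ, r * sin θ) ∈ halfPlane θ := by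
  change 0 < cos θ * (r * cos θ) + sin θ * (r * sin θ)
  convert hr using 1
  linear_combination r * cos_sq_add_sin_sq θ

lemma exists_mem_halfPlane {p : ℝ × ℝ} (hp : p ≠ 0) : ∃ θ₀, p ∈ halfPlane θ₀ := by
  set z : ℂ := ⟨p.1, p.2⟩
  have hz : 0 < ‖z‖ :=
    norm_pos_iff.mpr fun h => hp (Prod.ext (congrArg Complex.re h) (congrArg Complex.im h))
  have hnorm : ‖z‖ * (cos (Complex.arg z) * p.1 + sin (Complex.arg z) * p.2) = ‖z‖ ^ 2 := by
    rw [mul_add, ← mul_assoc, ← mul_assoc, Complex.norm_mul_cos_arg, Complex.norm_mul_sin_arg,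
      Complex.sq_norm, Complex.normSq_apply]
  exact ⟨Complex.arg z, (mul_pos_iff_of_pos_left hz).mp (hnorm ▸ pow_pos hz 2)⟩

lemma localArg_polar (r θ : ℝ) : localArg θ (r * cos θ, r * sin θ) = θ := by
  have h : cos θ * (r * sin θ) - sin θ * (r * cos θ) = 0 := by ring
  simp [localArg, h]

lemma sqrt_mul_cos_sin_localArg {θ₀ x y : ℝ} (h : (x, y) ∈ halfPlane θ₀) :
    √(x ^ 2 + y ^ 2) * cos (localArg θ₀ (x, y)) = x ∧
      √(x ^ 2 + y ^ 2) * sin (localArg θ₀ (x, y)) = y := by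
  have h' : 0 < cos θ₀ * x + sin θ₀ * y := h
  have hq := sq_add_sq_pos_of_mem_halfPlane h
  rw [localArg, cos_add, sin_add, cos_arctan_div _ h', sin_arctan_div _ h', rotate_sq_add_sq]
  constructor <;> field_simp
  · linear_combination x * cos_sq_add_sin_sq θ₀
  · linear_combination y * cos_sq_add_sin_sq θ₀

lemma hasDerivAt_localArg_fst {θ₀ x y : ℝ} (h : (x, y) ∈ halfPlane θ₀) :
    HasDerivAt (fun t => localArg θ₀ (t, y)) (-y / (x ^ 2 + y ^ 2)) x := by
  have hA : HasDerivAt (fun t => cos θ₀ * t + sin θ₀ * y) (cos θ₀) x := by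
    simpa using ((hasDerivAt_id x).const_mul (cos θ₀)).add_const (sin θ₀ * y)
  have hB : HasDerivAt (fun t => cos θ₀ * y - sin θ₀ * t) (-sin θ₀) x := by
    simpa using ((hasDerivAt_id x).const_mul (sin θ₀)).const_sub (cos θ₀ * y)
  refine ((hasDerivAt_arctan_div hA hB h.ne').const_add θ₀).congr_deriv ?_
  rw [rotate_sq_add_sq]
  linear_combination (-y / (x ^ 2 + y ^ 2)) * cos_sq_add_sin_sq θ₀

lemma hasDerivAt_localArg_snd {θ₀ x y : ℝ} (h : (x, y) ∈ halfPlane θ₀) :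
    HasDerivAt (fun t => localArg θ₀ (x, t)) (x / (x ^ 2 + y ^ 2)) y := by
  have hA : HasDerivAt (fun t => cos θ₀ * x + sin θ₀ * t) (sin θ₀) y := by
    simpa using ((hasDerivAt_id y).const_mul (sin θ₀)).const_add (cos θ₀ * x)
  have hB : HasDerivAt (fun t => cos θ₀ * t - sin θ₀ * x) (cos θ₀) y := by
    simpa using ((hasDerivAt_id y).const_mul (cos θ₀)).sub_const (sin θ₀ * x)
  refine ((hasDerivAt_arctan_div hA hB h.ne').const_add θ₀).congr_deriv ?_
  rw [rotate_sq_add_sq]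
  linear_combination (x / (x ^ 2 + y ^ 2)) * cos_sq_add_sin_sq θ₀

lemma contDiffAt_polarExt {n : WithTop ℕ∞} {g : ℝ → ℝ} (hg : ContDiff ℝ n g) {θ₀ : ℝ}
    {p : ℝ × ℝ} (hp : p ∈ halfPlane θ₀) : ContDiffAt ℝ n (polarExt g θ₀) p := by
  have hquot : ContDiffAt ℝ n
      (fun q : ℝ × ℝ => (cos θ₀ * q.2 - sin θ₀ * q.1) / (cos θ₀ * q.1 + sin θ₀ * q.2)) p :=
    ContDiffAt.div (by fun_prop) (by fun_prop) (ne_of_gt hp)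
  have hArg : ContDiffAt ℝ n (localArg θ₀) p :=
    contDiffAt_const.add (contDiff_arctan.contDiffAt.comp p hquot)
  exact (by fun_prop : ContDiffAt ℝ n (fun q : ℝ × ℝ => q.1 ^ 2 + q.2 ^ 2) p).mul
    (hg.contDiffAt.comp p hArg)

section Partials

variable {g g' g'' : ℝ → ℝ} (hg : ∀ t, HasDerivAt g (g' t) t) {θ₀ x y : ℝ}
include hg

lemma eqOn_pderiv1_polarExt :
    Set.EqOn (pderiv1 (polarExt g θ₀))
      (fun p => 2 * p.1 * g (localArg θ₀ p) - p.2 * g' (localArg θ₀ p)) (halfPlane θ₀) := by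
  rintro ⟨x, y⟩ h
  have hq := (sq_add_sq_pos_of_mem_halfPlane h).ne'
  refine (((hasDerivAt_pow 2 x).add_const (y ^ 2)).mul
    ((hg _).comp x (hasDerivAt_localArg_fst h))).deriv.trans ?_
  simp only [Function.comp_apply]
  field_simp
  ring

lemma eqOn_pderiv2_polarExt :
    Set.EqOn (pderiv2 (polarExt g θ₀))
      (fun p => 2 * p.2 * g (localArg θ₀ p) + p.1 * g' (localArg θ₀ p)) (halfPlane θ₀) := by
  rintro ⟨x, y⟩ h
  have hq := (sq_add_sq_pos_of_mem_halfPlane h).ne'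
  refine (((hasDerivAt_pow 2 y).const_add (x ^ 2)).mul
    ((hg _).comp y (hasDerivAt_localArg_snd h))).deriv.trans ?_
  simp only [Function.comp_apply]
  field_simp
  ring

variable (hg' : ∀ t, HasDerivAt g' (g'' t) t)
include hg'

lemma pderiv1_pderiv1_polarExt (h : (x, y) ∈ halfPlane θ₀) :
    pderiv1 (pderiv1 (polarExt g θ₀)) (x, y) =
      2 * g (localArg θ₀ (x, y)) + (-2 * x * y * g' (localArg θ₀ (x, y))
        + y ^ 2 * g'' (localArg θ₀ (x, y))) / (x ^ 2 + y ^ 2) := by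
  have hq := (sq_add_sq_pos_of_mem_halfPlane h).ne'
  have hArg := hasDerivAt_localArg_fst h
  rw [((eqOn_pderiv1_polarExt hg).eventuallyEq_of_mem (halfPlane_mem_nhds h)).pderiv1_eq]
  refine ((((hasDerivAt_id x).const_mul 2).mul ((hg _).comp x hArg)).sub
    (((hg' _).comp x hArg).const_mul y)).deriv.trans ?_
  simp only [Function.comp_apply, id]
  field_simp
  ring

lemma pderiv2_pderiv2_polarExt (h : (x, y) ∈ halfPlane θ₀) :
    pderiv2 (pderiv2 (polarExt g θ₀)) (x, y) =
      2 * g (localArg θ₀ (x, y)) + (2 * x * y * g' (localArg θ₀ (x, y))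
        + x ^ 2 * g'' (localArg θ₀ (x, y))) / (x ^ 2 + y ^ 2) := by
  have hq := (sq_add_sq_pos_of_mem_halfPlane h).ne'
  have hArg := hasDerivAt_localArg_snd h
  rw [((eqOn_pderiv2_polarExt hg).eventuallyEq_of_mem (halfPlane_mem_nhds h)).pderiv2_eq]
  refine ((((hasDerivAt_id y).const_mul 2).mul ((hg _).comp y hArg)).add
    (((hg' _).comp y hArg).const_mul x)).deriv.trans ?_
  simp only [Function.comp_apply, id]
  field_simp
  ring

lemma pderiv1_pderiv2_polarExt (h : (x, y) ∈ halfPlane θ₀) :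
    pderiv1 (pderiv2 (polarExt g θ₀)) (x, y) =
      g' (localArg θ₀ (x, y)) - (2 * y ^ 2 * g' (localArg θ₀ (x, y))
        + x * y * g'' (localArg θ₀ (x, y))) / (x ^ 2 + y ^ 2) := by
  have hq := (sq_add_sq_pos_of_mem_halfPlane h).ne'
  have hArg := hasDerivAt_localArg_fst h
  rw [((eqOn_pderiv2_polarExt hg).eventuallyEq_of_mem (halfPlane_mem_nhds h)).pderiv1_eq]
  refine ((((hg _).comp x hArg).const_mul (2 * y)).add
    ((hasDerivAt_id x).mul ((hg' _).comp x hArg))).deriv.trans ?_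
  simp only [Function.comp_apply, id]
  field_simp
  ring

lemma hessianDet_polarExt_polar {r : ℝ} (hr : 0 < r) (θ : ℝ) :
    hessianDet (polarExt g θ) (r * cos θ, r * sin θ) =
      4 * g θ ^ 2 + 2 * g θ * g'' θ - g' θ ^ 2 := by
  have h := polar_mem_halfPlane hr θ
  have hq : (r * cos θ) ^ 2 + (r * sin θ) ^ 2 = r ^ 2 := by
    linear_combination r ^ 2 * cos_sq_add_sin_sq θ
  simp only [hessianDet]
  rw [pderiv1_pderiv1_polarExt hg hg' h, pderiv2_pderiv2_polarExt hg hg' h,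
    pderiv1_pderiv2_polarExt hg hg' h, localArg_polar, hq]
  field_simp
  linear_combination (2 * g θ * g'' θ - 4 * sin θ ^ 2 * g' θ ^ 2
    - 2 * cos θ * sin θ * g' θ * g'' θ) * cos_sq_add_sin_sq θ

end Partials

section PolarProfile

variable {g : ℝ → ℝ} {Φ : ℝ × ℝ → ℝ}
  (hΦ : ∀ r : ℝ, 0 < r → ∀ θ : ℝ, Φ (r * cos θ, r * sin θ) = r ^ 2 * g θ)
include hΦ

lemma eqOn_polarExt (θ₀ : ℝ) : Set.EqOn Φ (polarExt g θ₀) (halfPlane θ₀) := by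
  rintro ⟨x, y⟩ h
  obtain ⟨hx, hy⟩ := sqrt_mul_cos_sin_localArg h
  have hq := sq_add_sq_pos_of_mem_halfPlane h
  calc Φ (x, y)
      = Φ (√(x ^ 2 + y ^ 2) * cos (localArg θ₀ (x, y)),
          √(x ^ 2 + y ^ 2) * sin (localArg θ₀ (x, y))) := by rw [hx, hy]
    _ = polarExt g θ₀ (x, y) := by rw [hΦ _ (sqrt_pos.mpr hq), sq_sqrt hq.le, polarExt]

lemma eventuallyEq_polarExt {θ₀ : ℝ} {p : ℝ × ℝ} (hp : p ∈ halfPlane θ₀) :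
    Φ =ᶠ[𝓝 p] polarExt g θ₀ :=
  (eqOn_polarExt hΦ θ₀).eventuallyEq_of_mem (halfPlane_mem_nhds hp)

lemma contDiffOn_of_polar {n : WithTop ℕ∞} (hg : ContDiff ℝ n g) : ContDiffOn ℝ n Φ {0}ᶜ := by
  intro p hp
  obtain ⟨θ₀, hθ₀⟩ := exists_mem_halfPlane hp
  exact ((contDiffAt_polarExt hg hθ₀).congr_of_eventuallyEq
    (eventuallyEq_polarExt hΦ hθ₀)).contDiffWithinAt

lemma hessianDet_of_polar {g' g'' : ℝ → ℝ} (hg : ∀ t, HasDerivAt g (g' t) t)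
    (hg' : ∀ t, HasDerivAt g' (g'' t) t) {r : ℝ} (hr : 0 < r) (θ : ℝ) :
    hessianDet Φ (r * cos θ, r * sin θ) = 4 * g θ ^ 2 + 2 * g θ * g'' θ - g' θ ^ 2 := by
  rw [(eventuallyEq_polarExt hΦ (polar_mem_halfPlane hr θ)).hessianDet_eq,
    hessianDet_polarExt_polar hg hg' hr]

end PolarProfile

lemma hasDerivAt_const_div_sq {ρ : ℝ → ℝ} {ρ' x : ℝ} (hρ : HasDerivAt ρ ρ' x) (h : ρ x ≠ 0)
    (a : ℝ) : HasDerivAt (fun t => a / ρ t ^ 2) (-2 * a * ρ' / ρ x ^ 3) x := by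
  refine ((hasDerivAt_const x a).fun_div (hρ.fun_pow 2) (pow_ne_zero 2 h)).congr_deriv ?_
  field_simp
  ring

lemma hasDerivAt_const_mul_div_cube {ρ σ : ℝ → ℝ} {ρ' σ' x : ℝ} (hρ : HasDerivAt ρ ρ' x)
    (hσ : HasDerivAt σ σ' x) (h : ρ x ≠ 0) (a : ℝ) :
    HasDerivAt (fun t => a * σ t / ρ t ^ 3) (a * (σ' * ρ x - 3 * σ x * ρ') / ρ x ^ 4) x := by
  refine ((hσ.const_mul a).fun_div (hρ.fun_pow 3) (pow_ne_zero 3 h)).congr_deriv ?_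
  field_simp
  ring

theorem hessian_det_of_polar_weight_general
    (abar : ℝ)
    (ρ : ℝ → ℝ) (hρ : ContDiff ℝ 2 ρ)
    (hpos : ∀ θ : ℝ, 0 < ρ θ)
    (Φ : ℝ × ℝ → ℝ)
    (hΦ : ∀ r : ℝ, 0 < r → ∀ θ : ℝ,
      Φ (r * cos θ, r * sin θ) = abar * r ^ 2 / ρ θ ^ 2) :
    ContDiffOn ℝ 2 Φ ({(0 : ℝ × ℝ)}ᶜ) ∧
    ∀ r : ℝ, 0 < r → ∀ θ : ℝ,
      hessianDet Φ (r * cos θ, r * sin θ)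
        = (2 * abar / ρ θ ^ 2) ^ 2
            * (ρ θ ^ 2 + 2 * deriv ρ θ ^ 2 - ρ θ * deriv (deriv ρ) θ) / ρ θ ^ 2 := by
  have hρ₁ (t : ℝ) : HasDerivAt ρ (deriv ρ t) t := (hρ.differentiable two_ne_zero t).hasDerivAt
  have hρ₂ (t : ℝ) : HasDerivAt (deriv ρ) (deriv (deriv ρ) t) t :=
    ((ContDiff.deriv' (n := 1) hρ).differentiable one_ne_zero t).hasDerivAt
  have hΦ' (r : ℝ) (hr : 0 < r) (θ : ℝ) : Φ (r * cos θ, r * sin θ) = r ^ 2 * (abar / ρ θ ^ 2) :=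
    (hΦ r hr θ).trans (by ring)
  refine ⟨contDiffOn_of_polar hΦ' (contDiff_const.div (hρ.pow 2)
    fun θ => pow_ne_zero 2 (hpos θ).ne'), fun r hr θ => ?_⟩
  rw [hessianDet_of_polar hΦ' (fun t => hasDerivAt_const_div_sq (hρ₁ t) (hpos t).ne' abar)
    (fun t => hasDerivAt_const_mul_div_cube (hρ₁ t) (hρ₂ t) (hpos t).ne' (-2 * abar)) hr]
  have hρθ := (hpos θ).ne'
  field_simp
  ring

theorem hessian_det_of_polar_weight
    (abar : ℝ) (habar : 0 < abar)
    (ρ : ℝ → ℝ) (hρ : ContDiff ℝ 2 ρ)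
    (hper : Function.Periodic ρ (2 * π))
    (hpos : ∀ θ : ℝ, 0 < ρ θ)
    (Φ : ℝ × ℝ → ℝ)
    (hΦ : ∀ r : ℝ, 0 < r → ∀ θ : ℝ,
      Φ (r * cos θ, r * sin θ) = abar * r ^ 2 / ρ θ ^ 2) :
    ContDiffOn ℝ 2 Φ ({(0 : ℝ × ℝ)}ᶜ) ∧
    ∀ r : ℝ, 0 < r → ∀ θ : ℝ,
      hessianDet Φ (r * cos θ, r * sin θ)
        = (2 * abar / ρ θ ^ 2) ^ 2
            * (ρ θ ^ 2 + 2 * deriv ρ θ ^ 2 - ρ θ * deriv (deriv ρ) θ) / ρ θ ^ 2 :=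
  hessian_det_of_polar_weight_general abar ρ hρ hpos Φ hΦ
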